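/- Let n ∈ ℕ with n > 1, let 0 < γ ≤ 1/2 and 0 ≤ λ ≤ (n−1)/2, and suppose γ = 1/2 or λ = (n−1)γ. Let W = {(x,y) ∈ ℝ² : x > 0, y ≥ 0, 2x + (n−1)y = 1}, which is invariant under the normalised simplified operator S̃V_{n,γ,λ}. Then for every initial point s = (x⁽⁰⁾,y⁽⁰⁾) ∈ W the sequence S̃V_{n,γ,λ}^k(s) converges as k → ∞, and: (i) if γ ≠ 1/2 (hence λ = (n−1)γ), the limit is (γ, (1−2γ)/(n−1)); (ii) if γ = 1/2 and λ ≥ (n−1)/4, the limit is (1/2, 0); (iii) if γ = 1/2 and λ < (n−1)/4, the limit is (1/2, 0) when s = (1/2, 0), and is ( 2λ/(n−1), (n−1−4λ)/(n−1)² ) otherwise. -/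

import Mathlib

/-- The normalised simplified gonosomal operator `S̃V_{n,γ,λ}`. -/
noncomputable def nsvOp (n : ℕ) (γ l : ℝ) (p : ℝ × ℝ) : ℝ × ℝ :=
  ((γ * p.1 + l * p.2) / (p.1 + ((n : ℝ) - 1) * p.2),
   ((1 - 2 * γ) * p.1 + ((n : ℝ) - 1 - 2 * l) * p.2) /
     (((n : ℝ) - 1) * (p.1 + ((n : ℝ) - 1) * p.2)))

/-!
Write `N = n - 1`. If `λ = Nγ`, the numerators of both coordinates are multiples of the common
denominator `x + N y`, so every point of `W` is sent in one step to the fixed point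
`(γ, (1 - 2γ)/N)`.

If `γ = 1/2`, a point of `W` is determined by its first coordinate, and on `W` the operator
becomes the Möbius map `h(x) = ((1/2 - 2a) x + a)/(1 - x)` with `a = λ/N`, which keeps
`x ≤ 1/2`. Its fixed points are `1/2` and `2a`, since `h(x) - x = (x - 1/2)(x - 2a)/(1 - x)`.
From `x < 1/2` the orbit moves monotonically towards `min (2a) (1/2)` without crossing it,
so it converges to that fixed point.
-/

open Filter Topology Function

theorem exists_tendsto_iterate_of_mapsTo_Icc {α : Type*} [ConditionallyCompleteLinearOrder α]
    [TopologicalSpace α] [OrderTopology α] {f : α → α} {a b : α} (hab : a ≤ b)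
    (hf : ∀ x ∈ Set.Icc a b, x ≤ f x ∧ f x ≤ b) :
    ∃ L ∈ Set.Icc a b, Tendsto (fun k => f^[k] a) atTop (𝓝 L) := by
  have hmem : ∀ k, f^[k] a ∈ Set.Icc a b := by
    intro k
    induction k with
    | zero => exact ⟨le_rfl, hab⟩
    | succ k ih =>
      rw [iterate_succ_apply']
      exact ⟨ih.1.trans (hf _ ih).1, (hf _ ih).2⟩
  have hmono : Monotone (fun k => f^[k] a) := monotone_nat_of_le_succ fun k => by
    rw [iterate_succ_apply']
    exact (hf _ (hmem k)).1
  have hbdd : BddAbove (Set.range fun k => f^[k] a) :=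
    ⟨b, by rintro _ ⟨k, rfl⟩; exact (hmem k).2⟩
  exact ⟨⨆ k, f^[k] a, ⟨le_ciSup_of_le hbdd 0 le_rfl, ciSup_le fun k => (hmem k).2⟩,
    tendsto_atTop_ciSup hmono hbdd⟩

theorem exists_tendsto_iterate_of_mapsTo_Icc' {α : Type*} [ConditionallyCompleteLinearOrder α]
    [TopologicalSpace α] [OrderTopology α] {f : α → α} {a b : α} (hab : a ≤ b)
    (hf : ∀ x ∈ Set.Icc a b, a ≤ f x ∧ f x ≤ x) :
    ∃ L ∈ Set.Icc a b, Tendsto (fun k => f^[k] b) atTop (𝓝 L) := by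
  obtain ⟨L, ⟨hbL, hLa⟩, hL⟩ :=
    exists_tendsto_iterate_of_mapsTo_Icc (α := αᵒᵈ) (f := f) (a := OrderDual.toDual b)
      (b := OrderDual.toDual a) hab fun x hx => (hf x ⟨hx.2, hx.1⟩).symm
  exact ⟨L, ⟨hLa, hbL⟩, hL⟩

/-- `S̃V_{n,1/2,λ}` on `W`, read in the first coordinate, with `a = λ/(n-1)`. -/
noncomputable def halfMap (a x : ℝ) : ℝ := ((1 / 2 - 2 * a) * x + a) / (1 - x)

noncomputable def pointW (n : ℕ) (x : ℝ) : ℝ × ℝ := (x, (1 - 2 * x) / ((n : ℝ) - 1))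

theorem eq_pointW {n : ℕ} (hn : (n : ℝ) - 1 ≠ 0) {x y : ℝ}
    (h : 2 * x + ((n : ℝ) - 1) * y = 1) :
    (x, y) = pointW n x := by
  rw [pointW, Prod.mk.injEq]
  exact ⟨rfl, by field_simp; linarith⟩

theorem pointW_half (n : ℕ) : pointW n (1 / 2) = (1 / 2, 0) := by
  norm_num [pointW]

theorem pointW_two_mul_div {n : ℕ} (hn : (n : ℝ) - 1 ≠ 0) (l : ℝ) :
    pointW n (2 * (l / ((n : ℝ) - 1))) =
      (2 * l / ((n : ℝ) - 1), ((n : ℝ) - 1 - 4 * l) / ((n : ℝ) - 1) ^ 2) := by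
  rw [pointW, Prod.mk.injEq]
  constructor
  · ring
  · field_simp
    ring

section HalfMap

variable {a x : ℝ}

theorem halfMap_sub_self (hx : x ≠ 1) :
    halfMap a x - x = (x - 1 / 2) * (x - 2 * a) / (1 - x) := by
  have : 1 - x ≠ 0 := sub_ne_zero.mpr hx.symm
  rw [halfMap]; field_simp; ring

theorem halfMap_sub_two_mul (hx : x ≠ 1) :
    halfMap a x - 2 * a = (x - 2 * a) / (2 * (1 - x)) := by
  have : 1 - x ≠ 0 := sub_ne_zero.mpr hx.symm
  rw [halfMap]; field_simp; ring

theorem half_sub_halfMap (hx : x ≠ 1) :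
    1 / 2 - halfMap a x = (1 - 2 * a) * (1 / 2 - x) / (1 - x) := by
  have : 1 - x ≠ 0 := sub_ne_zero.mpr hx.symm
  rw [halfMap]; field_simp; ring

theorem halfMap_le_half (ha : a ≤ 1 / 2) (hx : x ≤ 1 / 2) : halfMap a x ≤ 1 / 2 := by
  have h := half_sub_halfMap (a := a) (by linarith : x ≠ 1)
  have : 0 ≤ (1 - 2 * a) * (1 / 2 - x) / (1 - x) :=
    div_nonneg (mul_nonneg (by linarith) (by linarith)) (by linarith)
  linarith

theorem eq_half_or_eq_two_mul_of_tendsto_halfMap_iterate {L : ℝ} (hL : L ≠ 1)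
    (h : Tendsto (fun k => (halfMap a)^[k] x) atTop (𝓝 L)) : L = 1 / 2 ∨ L = 2 * a := by
  have hden : 1 - L ≠ 0 := sub_ne_zero.mpr hL.symm
  have hcont : ContinuousAt (halfMap a) L := by
    unfold halfMap
    exact ContinuousAt.div (by fun_prop) (by fun_prop) hden
  have hfix : halfMap a L - L = 0 := sub_eq_zero.mpr (isFixedPt_of_tendsto_iterate h hcont)
  rw [halfMap_sub_self hL, div_eq_zero_iff, mul_eq_zero, sub_eq_zero, sub_eq_zero] at hfix
  exact hfix.resolve_right hden

theorem tendsto_halfMap_iterate (ha : a ≤ 1 / 2) (hx : x < 1 / 2) :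
    Tendsto (fun k => (halfMap a)^[k] x) atTop (𝓝 (min (2 * a) (1 / 2))) := by
  set c := min (2 * a) (1 / 2)
  have hc2a : c ≤ 2 * a := min_le_left _ _
  have hchalf : c ≤ 1 / 2 := min_le_right _ _
  rcases le_or_gt x c with hxc | hcx
  · obtain ⟨L, ⟨-, hLc⟩, hL⟩ :=
      exists_tendsto_iterate_of_mapsTo_Icc hxc fun u ⟨_, huc⟩ => by
        have hu1 : u ≠ 1 := by linarith
        have hup : 0 ≤ halfMap a u - u := by
          rw [halfMap_sub_self hu1]
          exact div_nonneg (mul_nonneg_of_nonpos_of_nonpos (by linarith) (by linarith))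
            (by linarith)
        have hle2a : halfMap a u - 2 * a ≤ 0 := by
          rw [halfMap_sub_two_mul hu1]
          exact div_nonpos_of_nonpos_of_nonneg (by linarith) (by linarith)
        exact ⟨by linarith, le_min (by linarith) (halfMap_le_half ha (by linarith))⟩
    have hcL : c ≤ L := by
      rcases eq_half_or_eq_two_mul_of_tendsto_halfMap_iterate (by linarith) hL with h | h <;>
        rw [h]
      exacts [hchalf, hc2a]
    rwa [le_antisymm hLc hcL] at hL
  · have hc : c = 2 * a :=
      (min_choice (2 * a) (1 / 2) : c = 2 * a ∨ c = 1 / 2).resolve_right fun h => by linarith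
    rw [hc] at hcx ⊢
    obtain ⟨L, ⟨-, hLx⟩, hL⟩ :=
      exists_tendsto_iterate_of_mapsTo_Icc' hcx.le fun u ⟨hcu, hux⟩ => by
        have hu1 : u ≠ 1 := by linarith
        have hdown : halfMap a u - u ≤ 0 := by
          rw [halfMap_sub_self hu1]
          exact div_nonpos_of_nonpos_of_nonneg
            (mul_nonpos_of_nonpos_of_nonneg (by linarith) (by linarith)) (by linarith)
        have hge2a : 0 ≤ halfMap a u - 2 * a := by
          rw [halfMap_sub_two_mul hu1]
          exact div_nonneg (by linarith) (by linarith)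
        exact ⟨by linarith, by linarith⟩
    rcases eq_half_or_eq_two_mul_of_tendsto_halfMap_iterate (by linarith) hL with h | h
    · linarith
    · rwa [h] at hL

end HalfMap

section Operator

variable {n : ℕ} {γ l : ℝ}

theorem nsvOp_eq_of_l_eq (hn : (n : ℝ) - 1 ≠ 0) {p : ℝ × ℝ}
    (hp : p.1 + ((n : ℝ) - 1) * p.2 ≠ 0) :
    nsvOp n γ (((n : ℝ) - 1) * γ) p = (γ, (1 - 2 * γ) / ((n : ℝ) - 1)) := by
  simp only [nsvOp, Prod.mk.injEq]
  constructor <;> field_simp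

theorem tendsto_nsvOp_iterate_of_l_eq (hn : (n : ℝ) - 1 ≠ 0) (hγ : γ ≠ 1) {p : ℝ × ℝ}
    (hp : p.1 + ((n : ℝ) - 1) * p.2 ≠ 0) :
    Tendsto (fun k => (nsvOp n γ (((n : ℝ) - 1) * γ))^[k] p) atTop
      (𝓝 (γ, (1 - 2 * γ) / ((n : ℝ) - 1))) := by
  have hfix : IsFixedPt (nsvOp n γ (((n : ℝ) - 1) * γ)) (γ, (1 - 2 * γ) / ((n : ℝ) - 1)) :=
    nsvOp_eq_of_l_eq hn (by field_simp; intro h; apply hγ; linarith)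
  refine tendsto_atTop_of_eventually_const (i₀ := 1) fun k hk => ?_
  obtain ⟨k, rfl⟩ := Nat.exists_eq_add_of_le' hk
  rw [iterate_succ_apply, nsvOp_eq_of_l_eq hn hp]
  exact hfix.iterate k

theorem isFixedPt_nsvOp_half : IsFixedPt (nsvOp n (1 / 2) l) (1 / 2, 0) := by
  simp only [IsFixedPt, nsvOp, Prod.mk.injEq]
  norm_num

theorem nsvOp_half_pointW (hn : (n : ℝ) - 1 ≠ 0) {x : ℝ} (hx : x ≠ 1) :
    nsvOp n (1 / 2) l (pointW n x) = pointW n (halfMap (l / ((n : ℝ) - 1)) x) := by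
  have hden : x + ((n : ℝ) - 1) * ((1 - 2 * x) / ((n : ℝ) - 1)) = 1 - x := by
    field_simp; ring
  have : 1 - x ≠ 0 := sub_ne_zero.mpr hx.symm
  simp only [nsvOp, pointW, halfMap, hden, Prod.mk.injEq]
  constructor <;> field_simp <;> ring

theorem nsvOp_half_iterate_pointW (hn : (n : ℝ) - 1 ≠ 0) (hl : l / ((n : ℝ) - 1) ≤ 1 / 2)
    {x : ℝ} (hx : x ≤ 1 / 2) (k : ℕ) :
    (nsvOp n (1 / 2) l)^[k] (pointW n x) = pointW n ((halfMap (l / ((n : ℝ) - 1)))^[k] x) := by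
  induction k generalizing x with
  | zero => rfl
  | succ k ih =>
    rw [iterate_succ_apply, iterate_succ_apply, nsvOp_half_pointW hn (by linarith),
      ih (halfMap_le_half hl hx)]

theorem tendsto_nsvOp_half_iterate (hn : 0 < (n : ℝ) - 1) (hl : l ≤ ((n : ℝ) - 1) / 2)
    {x : ℝ} (hx : x < 1 / 2) :
    Tendsto (fun k => (nsvOp n (1 / 2) l)^[k] (pointW n x)) atTop
      (𝓝 (pointW n (min (2 * (l / ((n : ℝ) - 1))) (1 / 2)))) := by
  have ha : l / ((n : ℝ) - 1) ≤ 1 / 2 := by rw [div_le_iff₀ hn]; linarith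
  simp_rw [nsvOp_half_iterate_pointW hn.ne' ha hx.le]
  have hcont : Continuous (pointW n) := by unfold pointW; fun_prop
  exact (hcont.tendsto _).comp (tendsto_halfMap_iterate ha hx)

end Operator

theorem nsvOp_limits_general (n : ℕ) (hn : 1 < n) (γ l : ℝ)
    (hγ1 : γ ≤ 1 / 2) (hl1 : l ≤ ((n : ℝ) - 1) / 2)
    (hcase : γ = 1 / 2 ∨ l = ((n : ℝ) - 1) * γ)
    (s : ℝ × ℝ) (hs : 0 < s.1 ∧ 0 ≤ s.2 ∧ 2 * s.1 + ((n : ℝ) - 1) * s.2 = 1) :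
    (∃ L : ℝ × ℝ, Filter.Tendsto (fun k => (nsvOp n γ l)^[k] s) Filter.atTop (nhds L)) ∧
    (γ ≠ 1 / 2 →
      Filter.Tendsto (fun k => (nsvOp n γ l)^[k] s) Filter.atTop
        (nhds (γ, (1 - 2 * γ) / ((n : ℝ) - 1)))) ∧
    (γ = 1 / 2 →
      (((n : ℝ) - 1) / 4 ≤ l →
        Filter.Tendsto (fun k => (nsvOp n γ l)^[k] s) Filter.atTop
          (nhds ((1 : ℝ) / 2, (0 : ℝ)))) ∧
      (l < ((n : ℝ) - 1) / 4 →
        (s = ((1 : ℝ) / 2, (0 : ℝ)) →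
          Filter.Tendsto (fun k => (nsvOp n γ l)^[k] s) Filter.atTop
            (nhds ((1 : ℝ) / 2, (0 : ℝ)))) ∧
        (s ≠ ((1 : ℝ) / 2, (0 : ℝ)) →
          Filter.Tendsto (fun k => (nsvOp n γ l)^[k] s) Filter.atTop
            (nhds (2 * l / ((n : ℝ) - 1),
              ((n : ℝ) - 1 - 4 * l) / ((n : ℝ) - 1) ^ 2))))) := by
  obtain ⟨x, y⟩ := s
  obtain ⟨-, hy, hW⟩ := hs
  have hN : (0 : ℝ) < n - 1 := by
    have : (1 : ℝ) < n := by exact_mod_cast hn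
    linarith
  have hx : x ≤ 1 / 2 := by nlinarith [mul_nonneg hN.le hy]
  by_cases hγ : γ = 1 / 2
  · subst hγ
    rw [eq_pointW hN.ne' hW]
    rcases hx.eq_or_lt with rfl | hx
    · rw [pointW_half]
      have h : Tendsto (fun k => (nsvOp n (1 / 2) l)^[k] ((1 : ℝ) / 2, (0 : ℝ))) atTop
          (𝓝 (1 / 2, 0)) :=
        tendsto_const_nhds.congr fun k => (isFixedPt_nsvOp_half.iterate k).symm
      exact ⟨⟨_, h⟩, fun h => absurd rfl h, fun _ =>
        ⟨fun _ => h, fun _ => ⟨fun _ => h, fun h => absurd rfl h⟩⟩⟩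
    · have h := tendsto_nsvOp_half_iterate hN hl1 hx
      refine ⟨⟨_, h⟩, fun h => absurd rfl h, fun _ =>
        ⟨fun hl => ?_, fun hl => ⟨fun hs => ?_, fun _ => ?_⟩⟩⟩
      · rwa [min_eq_right (by rw [← mul_div_assoc, le_div_iff₀ hN]; linarith),
          pointW_half] at h
      · exact absurd (congrArg Prod.fst hs) hx.ne
      · rwa [min_eq_left (by rw [← mul_div_assoc, div_le_iff₀ hN]; linarith),
          pointW_two_mul_div hN.ne'] at h
  · obtain rfl := hcase.resolve_left hγ
    have h := tendsto_nsvOp_iterate_of_l_eq (γ := γ) (p := (x, y)) hN.ne'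
      (by linarith) (by linarith)
    exact ⟨⟨_, h⟩, fun _ => h, fun h => absurd h hγ⟩

theorem nsvOp_limits (n : ℕ) (hn : 1 < n) (γ l : ℝ)
    (hγ0 : 0 < γ) (hγ1 : γ ≤ 1 / 2) (hl0 : 0 ≤ l) (hl1 : l ≤ ((n : ℝ) - 1) / 2)
    (hcase : γ = 1 / 2 ∨ l = ((n : ℝ) - 1) * γ)
    (s : ℝ × ℝ) (hs : 0 < s.1 ∧ 0 ≤ s.2 ∧ 2 * s.1 + ((n : ℝ) - 1) * s.2 = 1) :
    (∃ L : ℝ × ℝ, Filter.Tendsto (fun k => (nsvOp n γ l)^[k] s) Filter.atTop (nhds L)) ∧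
    (γ ≠ 1 / 2 →
      Filter.Tendsto (fun k => (nsvOp n γ l)^[k] s) Filter.atTop
        (nhds (γ, (1 - 2 * γ) / ((n : ℝ) - 1)))) ∧
    (γ = 1 / 2 →
      (((n : ℝ) - 1) / 4 ≤ l →
        Filter.Tendsto (fun k => (nsvOp n γ l)^[k] s) Filter.atTop
          (nhds ((1 : ℝ) / 2, (0 : ℝ)))) ∧
      (l < ((n : ℝ) - 1) / 4 →
        (s = ((1 : ℝ) / 2, (0 : ℝ)) →
          Filter.Tendsto (fun k => (nsvOp n γ l)^[k] s) Filter.atTop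
            (nhds ((1 : ℝ) / 2, (0 : ℝ)))) ∧
        (s ≠ ((1 : ℝ) / 2, (0 : ℝ)) →
          Filter.Tendsto (fun k => (nsvOp n γ l)^[k] s) Filter.atTop
            (nhds (2 * l / ((n : ℝ) - 1),
              ((n : ℝ) - 1 - 4 * l) / ((n : ℝ) - 1) ^ 2))))) :=
  nsvOp_limits_general n hn γ l hγ1 hl1 hcase s hs
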